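/- For a rack X with a fixed element a ∈ X that acts trivially in the sense considered, the map g: C_{n-1}^R(X) → C_n^R(X) defined by g(x_2,...,x_n) = (-1)^n Σ_{y∈X} (y, x_2, ..., x_n) is a chain map with respect to the rack boundary, when X is finite. -/
import Mathlib


/-- Delete the `i`-th coordinate of a tuple. -/
def delF {X : Type*} {n : ℕ} (i : Fin (n + 1)) (x : Fin (n + 1) → X) : Fin n → X :=
  fun j => x (i.succAbove j)

/-- Delete the `i`-th coordinate, acting by `* x_i` on the earlier coordinates. -/
def delS {X : Type*} (op : X → X → X) {n : ℕ} (i : Fin (n + 1)) (x : Fin (n + 1) → X) :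
    Fin n → X :=
  fun j => if (j : ℕ) < (i : ℕ) then op (x (Fin.castSucc j)) (x i) else x (i.succAbove j)

/-- The rack boundary of a generator (tuples indexed from 0; the paper's index `i ∈ {2,…,n}`
corresponds to `i ∈ {1,…,n}` here, with sign `(-1)^(i+1)`). -/
noncomputable def bdryGen {X : Type*} (op : X → X → X) {n : ℕ} (x : Fin (n + 1) → X) :
    (Fin n → X) →₀ ℤ :=
  ∑ i : Fin (n + 1), if (i : ℕ) = 0 then 0 else
    ((-1 : ℤ) ^ ((i : ℕ) + 1)) •
      (Finsupp.single (delF i x) 1 - Finsupp.single (delS op i x) 1)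

/-- The rack boundary map `∂ : C^R_{n+1}(X) → C^R_n(X)`. -/
noncomputable def bdry {X : Type*} (op : X → X → X) (n : ℕ) :
    ((Fin (n + 1) → X) →₀ ℤ) →ₗ[ℤ] ((Fin n → X) →₀ ℤ) :=
  Finsupp.lsum ℤ fun x => LinearMap.toSpanSingleton ℤ _ (bdryGen op x)

/-- The chain map `*_a`, applying `* a` to every coordinate. -/
noncomputable def starMap {X : Type*} (op : X → X → X) (a : X) (m : ℕ) :
    ((Fin m → X) →₀ ℤ) →ₗ[ℤ] ((Fin m → X) →₀ ℤ) :=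
  Finsupp.lsum ℤ fun x =>
    LinearMap.toSpanSingleton ℤ _ (Finsupp.single (fun j => op (x j) a) 1)

/-- The map `h_a`, appending `a` as the last coordinate. -/
noncomputable def hmap {X : Type*} (a : X) (m : ℕ) :
    ((Fin m → X) →₀ ℤ) →ₗ[ℤ] ((Fin (m + 1) → X) →₀ ℤ) :=
  Finsupp.lsum ℤ fun x => LinearMap.toSpanSingleton ℤ _ (Finsupp.single (Fin.snoc x a) 1)


lemma delF_cons {X : Type*} {m : ℕ} (j : Fin (m + 1)) (y : X) (w : Fin (m + 1) → X) :
    delF j.succ (Fin.cons y w) = Fin.cons y (delF j w) := by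
  funext k
  induction k using Fin.cases with
  | zero => simp [delF]
  | succ l => simp [delF, Fin.succ_succAbove_succ]

lemma delS_cons {X : Type*} (op : X → X → X) {m : ℕ} (j : Fin (m + 1)) (y : X)
    (w : Fin (m + 1) → X) :
    delS op j.succ (Fin.cons y w) = Fin.cons (op y (w j)) (delS op j w) := by
  funext k
  induction k using Fin.cases with
  | zero => simp [delS]
  | succ l =>
    simp only [delS, Fin.cons_succ, Fin.val_succ, Nat.succ_lt_succ_iff,
      Fin.succ_succAbove_succ, ← Fin.succ_castSucc]

lemma delS_zero {X : Type*} (op : X → X → X) {m : ℕ} (x : Fin (m + 1) → X) :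
    delS op 0 x = delF 0 x := by
  funext j; simp [delS, delF]

lemma bdry_single {X : Type*} (op : X → X → X) {n : ℕ} (x : Fin (n + 1) → X) :
    bdry op n (Finsupp.single x 1) = bdryGen op x := by
  simp [bdry, Finsupp.lsum_single, LinearMap.toSpanSingleton_apply]

lemma sumD {X : Type*} [Fintype X] {op : X → X → X}
    (hbij : ∀ b : X, Function.Bijective fun a => op a b) {m : ℕ} (b : X) (v : Fin m → X) :
    ∑ y : X, Finsupp.single (Fin.cons (op y b) v : Fin (m + 1) → X) (1 : ℤ)
      = ∑ y : X, Finsupp.single (Fin.cons y v : Fin (m + 1) → X) (1 : ℤ) :=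
  Fintype.sum_bijective _ (hbij b) _ _ (fun _ => rfl)

/-- For a finite rack `X`, the map `g(x₂,…,xₙ) = (-1)^n Σ_{y∈X} (y, x₂, …, xₙ)`
is a chain map with respect to the rack boundary. -/
theorem gmap_chain_map {X : Type*} [Fintype X] (op : X → X → X)
    (hbij : ∀ b : X, Function.Bijective fun a => op a b)
    (hdist : ∀ a b c : X, op (op a b) c = op (op a c) (op b c))
    (g : ∀ m : ℕ, ((Fin m → X) →₀ ℤ) →ₗ[ℤ] ((Fin (m + 1) → X) →₀ ℤ))
    (hgdef : ∀ m : ℕ, g m = Finsupp.lsum ℤ fun w =>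
      LinearMap.toSpanSingleton ℤ _
        (((-1 : ℤ) ^ (m + 1)) • ∑ y : X, Finsupp.single ((Fin.cons y w) : Fin (m + 1) → X) (1 : ℤ)))
    (n : ℕ) :
    (bdry op (n + 1)) ∘ₗ (g (n + 1)) = (g n) ∘ₗ (bdry op n) := by
  have gsingle : ∀ (m : ℕ) (x : Fin m → X), g m (Finsupp.single x 1)
      = ((-1 : ℤ) ^ (m + 1)) • ∑ y : X, Finsupp.single (Fin.cons y x : Fin (m + 1) → X) (1 : ℤ) := by
    intro m x
    rw [hgdef]
    simp [Finsupp.lsum_single, LinearMap.toSpanSingleton_apply]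
  apply Finsupp.lhom_ext'
  intro w
  apply LinearMap.ext_ring
  simp only [LinearMap.coe_comp, Function.comp_apply, Finsupp.lsingle_apply]
  rw [gsingle, bdry_single, map_smul, map_sum]
  simp only [bdry_single]
  unfold bdryGen
  rw [map_sum, Finset.sum_comm, Fin.sum_univ_succ]
  simp only [Fin.val_zero, if_pos rfl, if_true, if_false, Finset.sum_const_zero, zero_add,
    Fin.val_succ, Nat.succ_ne_zero, if_neg (Nat.succ_ne_zero _), delF_cons, delS_cons]
  rw [Finset.smul_sum]
  refine Finset.sum_congr rfl fun j _ => ?_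
  by_cases hj : (j : ℕ) = 0
  · have hj0 : j = 0 := Fin.ext hj
    subst hj0
    rw [if_pos hj, map_zero]
    simp only [delS_zero, smul_sub, Finset.sum_sub_distrib, ← Finset.smul_sum]
    rw [sumD hbij]
    simp
  · rw [if_neg hj, map_smul, map_sub, gsingle, gsingle]
    simp only [smul_sub, Finset.sum_sub_distrib, ← Finset.smul_sum]
    rw [sumD hbij]
    have hs : ((-1 : ℤ) ^ (n + 1 + 1)) * ((-1) ^ ((j : ℕ) + 1 + 1))
        = ((-1) ^ ((j : ℕ) + 1)) * ((-1) ^ (n + 1)) := by ring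
    rw [smul_smul, smul_smul, smul_smul, smul_smul, hs]
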